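/- arXiv:1509.03128 — 6 statements merged into one kernel-verified Lean document; each statement's English description precedes it below -/
import Mathlib

section
/- Let F be a field, n ≥ 2, and let c₁,…,c_{n−1} and d₁,…,d_{n−1} be nonzero elements of F. Set N = ∑_{i=1}^{n−1} cᵢ E_{i,i+1} and N' = ∑_{i=1}^{n−1} dᵢ E_{i,i+1}. If g ∈ GL_n(F) satisfies g N = N' g, then g is upper triangular, i.e. g_{ij} = 0 whenever i > j. -/
/-!
Comparing the entries `(i, j + 1)` of `g N = N' g` gives `g i j * c j = d i * g (i + 1) (j + 1)`,
where the right side is `0` in the last row. Since `c j ≠ 0`, descending induction on the row `i`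
shows that every entry below the diagonal vanishes.
-/

namespace Matrix

variable {R : Type*} [Semiring R] {n : ℕ}

def superdiagonal (c : Fin (n - 1) → R) : Matrix (Fin n) (Fin n) R :=
  ∑ k : Fin (n - 1), single (k.castLE (n.sub_le 1)) ⟨k.1 + 1, Nat.add_lt_of_lt_sub k.2⟩ (c k)

theorem mul_superdiagonal_apply_succ {m : Type*} (A : Matrix m (Fin n) R) (c : Fin (n - 1) → R)
    (i : m) (j : Fin n) (hj : j.1 + 1 < n) :
    (A * superdiagonal c) i ⟨j.1 + 1, hj⟩ = A i j * c ⟨j.1, by omega⟩ := by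
  rw [superdiagonal, Matrix.mul_sum, Matrix.sum_apply,
    Finset.sum_eq_single_of_mem ⟨j.1, by omega⟩ (Finset.mem_univ _)]
  · exact mul_single_apply_same _ _ _ _ _
  · intro k _ hk
    refine mul_single_apply_of_ne _ _ _ _ _ (fun h => hk (Fin.ext ?_)) _
    simp only [Fin.ext_iff] at h ⊢
    omega

theorem superdiagonal_mul_apply {p : Type*} (d : Fin (n - 1) → R) (A : Matrix (Fin n) p R)
    (i : Fin n) (j : p) :
    (superdiagonal d * A) i j =
      if h : i.1 + 1 < n then d ⟨i.1, by omega⟩ * A ⟨i.1 + 1, h⟩ j else 0 := by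
  rw [superdiagonal, Matrix.sum_mul, Matrix.sum_apply]
  split_ifs with h
  · rw [Finset.sum_eq_single_of_mem ⟨i.1, by omega⟩ (Finset.mem_univ _)]
    · exact single_mul_apply_same _ _ _ _ _
    · intro k _ hk
      refine single_mul_apply_of_ne _ _ _ _ _ (fun h => hk (Fin.ext ?_)) _
      simp only [Fin.ext_iff, Fin.val_castLE] at h ⊢
      omega
  · refine Finset.sum_eq_zero fun k _ => single_mul_apply_of_ne _ _ _ _ _ ?_ _
    simp only [ne_eq, Fin.ext_iff, Fin.val_castLE]
    omega

theorem apply_eq_zero_of_lt_of_mul_superdiagonal_eq [NoZeroDivisors R]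
    {A : Matrix (Fin n) (Fin n) R} {c d : Fin (n - 1) → R} (hc : ∀ k, c k ≠ 0)
    (hA : A * superdiagonal c = superdiagonal d * A) (i j : Fin n) (hji : j < i) : A i j = 0 := by
  have hj : j.1 + 1 < n := by omega
  have key := congrFun (congrFun hA i) ⟨j.1 + 1, hj⟩
  rw [mul_superdiagonal_apply_succ, superdiagonal_mul_apply] at key
  split_ifs at key with hi
  · rw [apply_eq_zero_of_lt_of_mul_superdiagonal_eq hc hA ⟨i.1 + 1, hi⟩ ⟨j.1 + 1, hj⟩
      (Fin.mk_lt_mk.mpr (by omega)), mul_zero] at key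
    exact (mul_eq_zero.mp key).resolve_right (hc _)
  · exact (mul_eq_zero.mp key).resolve_right (hc _)
termination_by n - i

end Matrix

/-- Let `F` be a field, `n ≥ 2`, and let `c₁,…,c_{n−1}` and `d₁,…,d_{n−1}` be nonzero elements
of `F`.  Set `N = ∑ cᵢ E_{i,i+1}` and `N' = ∑ dᵢ E_{i,i+1}`.  If `g ∈ GL_n(F)` satisfies
`g N = N' g`, then `g` is upper triangular, i.e. `g i j = 0` whenever `i > j`. -/
theorem upperTriangular_of_conj_regular_nilpotent
    {F : Type*} [Field F] (n : ℕ)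
    (c d : Fin (n - 1) → F) (hc : ∀ i, c i ≠ 0)
    (g : GL (Fin n) F)
    (hg : (g : Matrix (Fin n) (Fin n) F) *
        (∑ i : Fin (n - 1), Matrix.single
          (⟨i.1, by have := i.2; omega⟩ : Fin n) (⟨i.1 + 1, by have := i.2; omega⟩ : Fin n) (c i)) =
      (∑ i : Fin (n - 1), Matrix.single
          (⟨i.1, by have := i.2; omega⟩ : Fin n) (⟨i.1 + 1, by have := i.2; omega⟩ : Fin n) (d i)) *
        (g : Matrix (Fin n) (Fin n) F)) :
    ∀ i j : Fin n, j < i → (g : Matrix (Fin n) (Fin n) F) i j = 0 :=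
  Matrix.apply_eq_zero_of_lt_of_mul_superdiagonal_eq hc hg
end

section
/- Let F be a field of characteristic p > 0, let n ≥ 2 with p ∣ n, and suppose the quotient group Fˣ/(Fˣ)ᵖ is infinite, where (Fˣ)ᵖ = {xᵖ : x ∈ Fˣ}. Then the matrices ∑_{i=1}^{n−1} cᵢ E_{i,i+1}, as (c₁,…,c_{n−1}) ranges over (Fˣ)^{n−1}, fall into infinitely many SL_n(F)-conjugacy classes; in particular SL_n(F) has infinitely many orbits of nilpotent matrices under conjugation. -/
/-!
Let `N(c)` be the nilpotent matrix with `c 0, …, c (n - 2)` on the superdiagonal. For a vector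
`v`, the Krylov matrix `[N^(n-1) v | … | N v | v]` of `N(c)` is upper triangular with determinant
`w(c) · v_{n-1}^n`, where `w(c) = ∏ₖ c k ^ (k + 1)`. If `g N(c) = N(c') g`, then `g` carries the
Krylov matrix of `N(c)` at `e_{n-1}` to that of `N(c')` at `g e_{n-1}`, and `det g = 1` gives
`w(c) = b^n w(c')`. So the `SL_n`-orbit of `N(c)` determines `w(c)` modulo `n`-th powers, hence
modulo `p`-th powers when `p ∣ n`, and the matrices `N(t, 1, …, 1)` with `t` running over
representatives of `Fˣ/(Fˣ)ᵖ` lie in pairwise distinct orbits.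
-/

open Finset Matrix

section Weight

variable {M : Type*} [CommMonoid M]

-- `∏ k < n - 1, c k ^ (k + 1)`, written as the product of the diagonal of the Krylov matrix.
def superdiagWeight (n : ℕ) (c : ℕ → M) : M :=
  ∏ i : Fin n, ∏ m ∈ range (n - 1 - i), c (i + m)

theorem superdiagWeight_mulSingle_zero {n : ℕ} (hn : 2 ≤ n) (t : M) :
    superdiagWeight n (Pi.mulSingle 0 t) = t := by
  rw [superdiagWeight, Fintype.prod_eq_single ⟨0, by omega⟩]
  · simp [Finset.prod_pi_mulSingle', show 0 < n - 1 by omega]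
  · intro i hi
    refine prod_eq_one fun m _ => Pi.mulSingle_eq_of_ne (M := fun _ => M) ?_ t
    have : (i : ℕ) ≠ 0 := fun h => hi (Fin.ext h)
    omega

end Weight

theorem range_powMonoidHom_le_of_dvd {G : Type*} [CommGroup G] {p n : ℕ} (h : p ∣ n) :
    (powMonoidHom n : G →* G).range ≤ (powMonoidHom p).range := by
  rintro _ ⟨b, rfl⟩
  obtain ⟨k, rfl⟩ := h
  exact ⟨b ^ k, by simp [← pow_mul, mul_comm]⟩

namespace Matrix

variable {R : Type*} {n : ℕ}

section CommSemiring

variable [CommSemiring R]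

def superdiag (c : ℕ → R) : Matrix (Fin n) (Fin n) R :=
  of fun i j => if (j : ℕ) = i + 1 then c i else 0

theorem sum_single_eq_superdiag (c : ℕ → R) :
    ∑ i : Fin (n - 1), single (⟨i.1, by have := i.2; omega⟩ : Fin n)
      (⟨i.1 + 1, by have := i.2; omega⟩ : Fin n) (c i) = superdiag c := by
  ext i j
  simp only [sum_apply, single_apply, superdiag, of_apply, Fin.ext_iff]
  split_ifs with h
  · rw [Finset.sum_eq_single ⟨i, by omega⟩] <;> grind
  · exact Finset.sum_eq_zero fun k _ => if_neg (by omega)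

theorem superdiag_mulVec (c : ℕ → R) (v : Fin n → R) (i : Fin n) :
    (superdiag c *ᵥ v) i = if h : i.1 + 1 < n then c i * v ⟨i + 1, h⟩ else 0 := by
  simp only [mulVec, dotProduct, superdiag, of_apply, ite_mul, zero_mul]
  split_ifs with h
  · rw [Finset.sum_eq_single ⟨i + 1, h⟩] <;> grind
  · exact Finset.sum_eq_zero fun j _ => if_neg (by omega)

theorem superdiag_pow_mulVec (c : ℕ → R) (k : ℕ) (v : Fin n → R) (i : Fin n) :
    (superdiag c ^ k *ᵥ v) i =
      if h : i.1 + k < n then (∏ m ∈ range k, c (i + m)) * v ⟨i + k, h⟩ else 0 := by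
  induction k generalizing v with
  | zero => simp
  | succ k ih =>
    rw [pow_succ, ← mulVec_mulVec, ih]
    by_cases h : i.1 + (k + 1) < n
    · simp [h, show i.1 + k < n by omega, superdiag_mulVec, prod_range_succ, mul_assoc,
        add_assoc]
    · split_ifs with h'
      · rw [superdiag_mulVec, dif_neg (by simpa [add_assoc] using h), mul_zero]
      · rfl

theorem superdiag_pow_eq_zero (c : ℕ → R) :
    superdiag c ^ n = (0 : Matrix (Fin n) (Fin n) R) := by
  ext i j
  simpa [mulVec_single_one] using superdiag_pow_mulVec c n (Pi.single j 1) i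

def krylov (A : Matrix (Fin n) (Fin n) R) (v : Fin n → R) : Matrix (Fin n) (Fin n) R :=
  of fun i j => (A ^ (n - 1 - j) *ᵥ v) i

theorem krylov_mulVec_of_mul_eq {A B g : Matrix (Fin n) (Fin n) R} (h : g * A = B * g)
    (v : Fin n → R) : krylov B (g *ᵥ v) = g * krylov A v := by
  ext i j
  change (B ^ (n - 1 - j) *ᵥ (g *ᵥ v)) i = _
  rw [mulVec_mulVec, ← (SemiconjBy.pow_right h _).eq, ← mulVec_mulVec]
  rfl

end CommSemiring

variable [CommRing R]

theorem det_krylov_superdiag (hn : 0 < n) (c : ℕ → R) (v : Fin n → R) :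
    (krylov (superdiag c) v).det = superdiagWeight n c * v ⟨n - 1, by omega⟩ ^ n := by
  have htriangular : (krylov (superdiag c) v).IsUpperTriangular := fun i j hij => by
    simp only [krylov, of_apply, superdiag_pow_mulVec]
    exact dif_neg (by simp only [id] at hij; omega)
  have hdiag (i : Fin n) : krylov (superdiag c) v i i =
      (∏ m ∈ range (n - 1 - i), c (i + m)) * v ⟨n - 1, by omega⟩ := by
    simp only [krylov, of_apply, superdiag_pow_mulVec]
    rw [dif_pos (by omega)]
    congr 3
    omega
  rw [det_of_isUpperTriangular htriangular, Finset.prod_congr rfl fun i _ => hdiag i,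
    prod_mul_distrib, prod_const, card_univ, Fintype.card_fin, superdiagWeight]

section SpecialLinearGroup

variable {ι : Type*} [Fintype ι] [DecidableEq ι]

def slConjOrbit (X : Matrix ι ι R) : Set (Matrix ι ι R) :=
  {Y | ∃ g : SpecialLinearGroup ι R,
    Y = (g : Matrix ι ι R) * X * ((g⁻¹ : SpecialLinearGroup ι R) : Matrix ι ι R)}

theorem mem_slConjOrbit_self (X : Matrix ι ι R) : X ∈ slConjOrbit X :=
  ⟨1, by simp⟩

theorem exists_mul_eq_mul_of_mem_slConjOrbit {X Y : Matrix ι ι R} (h : Y ∈ slConjOrbit X) :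
    ∃ g : SpecialLinearGroup ι R, (g : Matrix ι ι R) * X = Y * g := by
  obtain ⟨g, rfl⟩ := h
  refine ⟨g, ?_⟩
  rw [Matrix.mul_assoc _ _ (g : Matrix ι ι R), ← SpecialLinearGroup.coe_mul, inv_mul_cancel,
    SpecialLinearGroup.coe_one, Matrix.mul_one]

end SpecialLinearGroup

theorem exists_weight_eq_pow_mul_of_mem_slConjOrbit (hn : 0 < n) {c c' : ℕ → R}
    (h : superdiag c' ∈ slConjOrbit (superdiag c : Matrix (Fin n) (Fin n) R)) :
    ∃ b : R, superdiagWeight n c = b ^ n * superdiagWeight n c' := by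
  obtain ⟨g, hg⟩ := exists_mul_eq_mul_of_mem_slConjOrbit h
  set e : Fin n → R := Pi.single ⟨n - 1, by omega⟩ 1
  refine ⟨((g : Matrix (Fin n) (Fin n) R) *ᵥ e) ⟨n - 1, by omega⟩, ?_⟩
  have hdet := congrArg det (krylov_mulVec_of_mul_eq hg e)
  rw [det_mul, g.2, one_mul, det_krylov_superdiag hn, det_krylov_superdiag hn] at hdet
  simpa [e, mul_comm] using hdet.symm

theorem mem_range_powMonoidHom_of_slConjOrbit_eq {F : Type*} [Field F] (hn : 2 ≤ n) {s t : Fˣ}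
    (h : slConjOrbit (superdiag (Pi.mulSingle 0 (s : F)) : Matrix (Fin n) (Fin n) F) =
      slConjOrbit (superdiag (Pi.mulSingle 0 (t : F)))) :
    s⁻¹ * t ∈ (powMonoidHom n : Fˣ →* Fˣ).range := by
  obtain ⟨b, hb⟩ := exists_weight_eq_pow_mul_of_mem_slConjOrbit (by omega)
    (h ▸ mem_slConjOrbit_self _)
  rw [superdiagWeight_mulSingle_zero hn, superdiagWeight_mulSingle_zero hn] at hb
  have hb0 : b ≠ 0 := by
    rintro rfl
    rw [zero_pow (by omega), zero_mul] at hb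
    exact t.ne_zero hb
  refine ⟨Units.mk0 b hb0, Units.ext ?_⟩
  simp [hb, mul_left_comm]

end Matrix

/-- Let `F` be a field of characteristic `p > 0`, let `n ≥ 2` with `p ∣ n`, and suppose the
quotient group `Fˣ/(Fˣ)ᵖ` is infinite.  Then the matrices `∑ cᵢ E_{i,i+1}`, as
`(c₁,…,c_{n−1})` ranges over `(Fˣ)^{n−1}`, fall into infinitely many `SL_n(F)`-conjugacy
classes; in particular `SL_n(F)` has infinitely many orbits of nilpotent matrices under
conjugation. -/
theorem infinitely_many_regular_nilpotent_SL_orbits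
    {F : Type*} [Field F] (p n : ℕ)
    (hn : 2 ≤ n) (hpn : p ∣ n)
    (hinf : Infinite (Fˣ ⧸ (powMonoidHom p : Fˣ →* Fˣ).range)) :
    {S : Set (Matrix (Fin n) (Fin n) F) | ∃ c : Fin (n - 1) → Fˣ,
        S = {Y | ∃ g : Matrix.SpecialLinearGroup (Fin n) F,
          Y = (g : Matrix (Fin n) (Fin n) F) *
              (∑ i : Fin (n - 1), Matrix.single
                (⟨i.1, by have := i.2; omega⟩ : Fin n)
                (⟨i.1 + 1, by have := i.2; omega⟩ : Fin n) ((c i : F))) *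
              ((g⁻¹ : Matrix.SpecialLinearGroup (Fin n) F) : Matrix (Fin n) (Fin n) F)}}.Infinite ∧
    {S : Set (Matrix (Fin n) (Fin n) F) | ∃ X : Matrix (Fin n) (Fin n) F, IsNilpotent X ∧
        S = {Y | ∃ g : Matrix.SpecialLinearGroup (Fin n) F,
          Y = (g : Matrix (Fin n) (Fin n) F) * X *
              ((g⁻¹ : Matrix.SpecialLinearGroup (Fin n) F) : Matrix (Fin n) (Fin n) F)}}.Infinite := by
  let orbit (q : Fˣ ⧸ (powMonoidHom p : Fˣ →* Fˣ).range) : Set (Matrix (Fin n) (Fin n) F) :=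
    slConjOrbit (superdiag (Pi.mulSingle 0 (q.out : F)))
  have orbit_injective : Function.Injective orbit := fun q q' h => by
    rw [← QuotientGroup.out_eq' q, ← QuotientGroup.out_eq' q', QuotientGroup.eq]
    exact range_powMonoidHom_le_of_dvd hpn (mem_range_powMonoidHom_of_slConjOrbit_eq hn h)
  refine ⟨Set.infinite_of_injective_forall_mem orbit_injective fun q => ?_,
    Set.infinite_of_injective_forall_mem orbit_injective fun q => ?_⟩
  · refine ⟨fun i => (Pi.mulSingle 0 q.out : ℕ → Fˣ) i, ?_⟩
    have hc : (fun m => ((Pi.mulSingle 0 q.out : ℕ → Fˣ) m : F)) = Pi.mulSingle 0 (q.out : F) :=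
      funext (Pi.apply_mulSingle (fun _ => Units.val) (fun _ => Units.val_one) 0 q.out)
    simp only [orbit, ← hc, ← sum_single_eq_superdiag]
    rfl
  · exact ⟨_, ⟨n, superdiag_pow_eq_zero _⟩, rfl⟩
end

section
/- Let F be a field of characteristic p > 0 with p ∣ n and n ≥ 2, and suppose the additive quotient group F/F^{(p)} is infinite. Let N be the set of all n×n matrices X over F such that X^{pᵏ} = a·1 for some integer k ≥ 0 and some a ∈ F. Consider the equivalence relation on N defined by X ∼ Y if and only if there exist g ∈ GL_n(F) and c ∈ F with Y = g X g⁻¹ + c·1 (i.e. the images of X and Y in the Lie algebra of PGL_n are conjugate). Then N has infinitely many equivalence classes. -/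
/-!
For `a ∈ F` let `X_a` be block diagonal with `n / p` copies of the companion matrix of `tᵖ - a`,
so that `X_aᵖ = a • 1`. In characteristic `p` the Frobenius gives
`(g X g⁻¹ + c • 1)ᵖ = g Xᵖ g⁻¹ + cᵖ • 1`, so `X_b ∼ X_a` forces `b = a + cᵖ`, i.e. `b - a ∈ F^{(p)}`.
Hence `a ↦ [X_a]` induces an injection of the infinite group `F / F^{(p)}` into the set of classes.
-/

open Matrix

open Polynomial in
theorem AdjoinRoot.root_X_pow_sub_C_pow {R : Type*} [CommRing R] (a : R) (p : ℕ) :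
    root (X ^ p - C a) ^ p = of _ a := by
  rw [← sub_eq_zero, ← mk_X, ← mk_C, ← map_pow, ← map_sub, mk_self]

theorem Matrix.smul_one_injective {R ι : Type*} [CommRing R] [DecidableEq ι] [Nonempty ι] :
    Function.Injective fun a : R => (a • 1 : Matrix ι ι R) := fun a b h => by
  simpa using congr($h (Classical.arbitrary ι) (Classical.arbitrary ι))

section

variable {R : Type*} [CommRing R] {ι : Type*} [Fintype ι] [DecidableEq ι]

open Polynomial in
theorem Matrix.exists_pow_eq_smul_one_of_dvd_card [Nontrivial R] (a : R) {p : ℕ} (hp : p ≠ 0)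
    (hpι : p ∣ Fintype.card ι) : ∃ M : Matrix ι ι R, M ^ p = a • 1 := by
  obtain ⟨m, hm⟩ := hpι
  let pb := AdjoinRoot.powerBasis' (monic_X_pow_sub_C a hp)
  let B := Algebra.leftMulMatrix pb.basis (AdjoinRoot.root _)
  have hB : B ^ p = a • 1 := by
    rw [← map_pow, AdjoinRoot.root_X_pow_sub_C_pow, ← AdjoinRoot.algebraMap_eq, AlgHom.commutes,
      Algebra.algebraMap_eq_smul_one]
  let e : Fin pb.dim × Fin m ≃ ι := Fintype.equivOfCardEq (by simp [pb, hm])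
  refine ⟨reindexAlgEquiv R R e (blockDiagonal fun _ => B), ?_⟩
  rw [← map_pow, ← blockDiagonal_pow, Pi.pow_def, hB]
  change reindexAlgEquiv R R e (blockDiagonal (a • 1)) = _
  rw [blockDiagonal_smul, blockDiagonal_one, map_smul, map_one]

section CharP

variable [Nonempty ι] (p : ℕ) [Fact p.Prime] [CharP R p]

theorem Matrix.conj_add_smul_one_pow_char (g : GL ι R) (X : Matrix ι ι R) (c : R) :
    ((g : Matrix ι ι R) * X * (g⁻¹ : GL ι R) + c • 1) ^ p =
      (g : Matrix ι ι R) * X ^ p * (g⁻¹ : GL ι R) + c ^ p • 1 := by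
  rw [add_pow_char_of_commute _ ((Commute.one_right _).smul_right c), smul_pow, one_pow,
    Units.conj_pow]

theorem Matrix.eq_add_pow_char_of_eq_conj_add_smul_one {X Y : Matrix ι ι R} {a b c : R}
    (hX : X ^ p = a • 1) (hY : Y ^ p = b • 1) (g : GL ι R)
    (h : Y = (g : Matrix ι ι R) * X * (g⁻¹ : GL ι R) + c • 1) : b = a + c ^ p := by
  apply smul_one_injective (ι := ι)
  change b • 1 = (a + c ^ p) • (1 : Matrix ι ι R)
  rw [← hY, h, conj_add_smul_one_pow_char, hX, Matrix.mul_smul, mul_one, Matrix.smul_mul,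
    Units.mul_inv, add_smul]

end CharP

/-- The class of `X` for the relation `X ∼ Y ↔ Y = g X g⁻¹ + c • 1` inside the set `N` of
matrices some `p`-power of which is scalar. -/
def Matrix.pglClass (p : ℕ) (X : Matrix ι ι R) : Set (Matrix ι ι R) :=
  {Y | (∃ (k : ℕ) (a : R), Y ^ p ^ k = a • (1 : Matrix ι ι R)) ∧
    ∃ (g : GL ι R) (c : R), Y = (g : Matrix ι ι R) * X * ((g⁻¹ : GL ι R) : Matrix ι ι R) + c • 1}

end

/-- Let `F` be a field of characteristic `p > 0` with `p ∣ n` and `n ≥ 2`, and suppose the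
additive quotient group `F/F^{(p)}` is infinite (where `F^{(p)} = {xᵖ : x ∈ F}` is an additive
subgroup of `F`).  Let `N` be the set of `n×n` matrices `X` with `X^{pᵏ} = a • 1` for some
`k ≥ 0` and `a ∈ F`.  Consider the equivalence relation on `N` given by `X ∼ Y` iff there are
`g ∈ GL_n(F)` and `c ∈ F` with `Y = g X g⁻¹ + c • 1`.  Then `N` has infinitely many
equivalence classes. -/
theorem infinitely_many_pgl_nilpotent_classes
    {F : Type*} [Field F] (p n : ℕ) (hp : 0 < p) [CharP F p]
    (hn : 2 ≤ n) (hpn : p ∣ n)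
    (H : AddSubgroup F) (hH : (H : Set F) = {x : F | ∃ y : F, y ^ p = x})
    (hinf : Infinite (F ⧸ H)) :
    {S : Set (Matrix (Fin n) (Fin n) F) |
      ∃ X : Matrix (Fin n) (Fin n) F,
        (∃ (k : ℕ) (a : F), X ^ p ^ k = a • (1 : Matrix (Fin n) (Fin n) F)) ∧
        S = {Y | (∃ (k : ℕ) (a : F), Y ^ p ^ k = a • (1 : Matrix (Fin n) (Fin n) F)) ∧
          ∃ (g : GL (Fin n) F) (c : F),
            Y = (g : Matrix (Fin n) (Fin n) F) * X *
                ((g⁻¹ : GL (Fin n) F) : Matrix (Fin n) (Fin n) F)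
              + c • (1 : Matrix (Fin n) (Fin n) F)}}.Infinite := by
  have : Fact p.Prime := ⟨(CharP.char_is_prime_or_zero F p).resolve_right hp.ne'⟩
  have : Nonempty (Fin n) := ⟨⟨0, by omega⟩⟩
  choose X hX using fun a : F => exists_pow_eq_smul_one_of_dvd_card (ι := Fin n) a hp.ne'
    (by simpa)
  have hXN : ∀ a, ∃ (k : ℕ) (b : F), X a ^ p ^ k = b • 1 := fun a => ⟨1, a, by rw [pow_one, hX]⟩
  refine Set.infinite_of_injective_forall_mem (f := fun q : F ⧸ H => pglClass p (X q.out))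
    (fun q₁ q₂ (hq : pglClass p (X q₁.out) = pglClass p (X q₂.out)) => ?_)
    fun q => ⟨X q.out, hXN _, rfl⟩
  obtain ⟨-, g, c, hg⟩ : X q₂.out ∈ pglClass p (X q₁.out) := hq ▸ ⟨hXN _, 1, 0, by simp⟩
  rw [← QuotientAddGroup.out_eq' q₁, ← QuotientAddGroup.out_eq' q₂, QuotientAddGroup.eq,
    eq_add_pow_char_of_eq_conj_add_smul_one p (hX _) (hX _) g hg, neg_add_cancel_left,
    ← SetLike.mem_coe, hH]
  exact ⟨c, rfl⟩
end

section
/- Let F be a field of characteristic 2. Then the union of {0} with the conjugation orbit {g · n_{0,1} · g⁻¹ : g ∈ SO₃(F)} equals the set {n_{a,b} : a, b ∈ F and a·b ∈ F^{(2)}}. -/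
/-- The `3×3` matrix over `F` whose first row is `(0, a, b)` and all other entries `0`. -/
def soThreeNilpotent (F : Type*) [Field F] (a b : F) : Matrix (Fin 3) (Fin 3) F :=
  !![0, a, b; 0, 0, 0; 0, 0, 0]

set_option maxHeartbeats 1000000 in
/-- Let `F` be a field of characteristic 2, `Q(v) = v₀² + v₁v₂` and
`SO₃(F) = {g ∈ GL₃(F) : Q(gv) = Q(v) for all v}`.  Then the union of `{0}` with the
conjugation orbit `{g n_{0,1} g⁻¹ : g ∈ SO₃(F)}` equals `{n_{a,b} : a·b ∈ F^{(2)}}`. -/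
theorem so3_orbit_of_regular_nilpotent
    {F : Type*} [Field F] [CharP F 2] :
    ({0} : Set (Matrix (Fin 3) (Fin 3) F)) ∪
      {X | ∃ g : GL (Fin 3) F,
        (∀ v : Fin 3 → F,
          ((g : Matrix (Fin 3) (Fin 3) F).mulVec v 0) ^ 2 +
            ((g : Matrix (Fin 3) (Fin 3) F).mulVec v 1) *
              ((g : Matrix (Fin 3) (Fin 3) F).mulVec v 2)
          = (v 0) ^ 2 + (v 1) * (v 2)) ∧
        X = (g : Matrix (Fin 3) (Fin 3) F) * soThreeNilpotent F 0 1 *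
            ((g⁻¹ : GL (Fin 3) F) : Matrix (Fin 3) (Fin 3) F)} =
    {X | ∃ a b : F, (∃ y : F, y ^ 2 = a * b) ∧ X = soThreeNilpotent F a b} := by
  have h2 : (2 : F) = 0 := by exact_mod_cast CharP.cast_eq_zero F 2
  ext X
  simp only [Set.mem_union, Set.mem_singleton_iff, Set.mem_setOf_eq]
  constructor
  · rintro (rfl | ⟨g, hg, rfl⟩)
    · refine ⟨0, 0, ⟨0, by ring⟩, ?_⟩
      ext i j
      fin_cases i <;> fin_cases j <;>
        simp [soThreeNilpotent, Matrix.vecHead, Matrix.vecTail]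
    · set G := (g : Matrix (Fin 3) (Fin 3) F) with hGdef
      set Gi := ((g⁻¹ : GL (Fin 3) F) : Matrix (Fin 3) (Fin 3) F) with hGidef
      have hinv : Gi * G = 1 := g.inv_mul
      have e0 := hg ![1,0,0]
      have e1 := hg ![0,1,0]
      have e2 := hg ![0,0,1]
      have e12 := hg ![0,1,1]
      have e01 := hg ![1,1,0]
      have e02 := hg ![1,0,1]
      simp [Matrix.mulVec, dotProduct, Fin.sum_univ_three] at e0 e1 e2 e12 e01 e02
      have hB12 : G 1 1 * G 2 2 + G 1 2 * G 2 1 = 1 := by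
        linear_combination e12 - e1 - e2 - (G 0 1 * G 0 2) * h2
      have hB01 : G 1 0 * G 2 1 + G 1 1 * G 2 0 = 0 := by
        linear_combination e01 - e0 - e1 - (G 0 0 * G 0 1) * h2
      have hB02 : G 1 0 * G 2 2 + G 1 2 * G 2 0 = 0 := by
        linear_combination e02 - e0 - e2 - (G 0 0 * G 0 2) * h2
      have h10 : G 1 0 = 0 := by
        linear_combination (-(G 1 2)) * hB01 - G 1 1 * hB02 - G 1 0 * hB12 +
          (G 1 0 * G 1 2 * G 2 1 + G 1 1 * G 1 2 * G 2 0 + G 1 0 * G 1 1 * G 2 2) * h2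
      have h20 : G 2 0 = 0 := by
        linear_combination (-(G 2 2)) * hB01 - G 2 1 * hB02 - G 2 0 * hB12 +
          (G 2 0 * G 2 2 * G 1 1 + G 2 1 * G 2 2 * G 1 0 + G 2 0 * G 2 1 * G 1 2) * h2
      have h00 : G 0 0 = 1 := by
        have hsq : (G 0 0 - 1) ^ 2 = 0 := by
          linear_combination e0 - G 2 0 * h10 - G 0 0 * h2 + h2
        have h := pow_eq_zero_iff (n := 2) (by norm_num) |>.mp hsq
        linear_combination h
      have k0 := congrFun (congrFun hinv 2) 0
      have k1 := congrFun (congrFun hinv 2) 1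
      have k2 := congrFun (congrFun hinv 2) 2
      simp [Matrix.mul_apply, Fin.sum_univ_three, Matrix.one_apply] at k0 k1 k2
      have hGi20 : Gi 2 0 = 0 := by
        linear_combination k0 - Gi 2 1 * h10 - Gi 2 2 * h20 - Gi 2 0 * h00
      have hGi21 : Gi 2 1 = G 2 1 := by
        linear_combination G 2 2 * k1 + G 2 1 * k2 - Gi 2 1 * hB12 -
          (G 0 1 * G 2 2 + G 0 2 * G 2 1) * hGi20 - (Gi 2 2 * G 2 1 * G 2 2) * h2
      have hGi22 : Gi 2 2 = G 1 1 := by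
        linear_combination G 1 2 * k1 + G 1 1 * k2 - Gi 2 2 * hB12 -
          (G 0 1 * G 1 2 + G 0 2 * G 1 1) * hGi20 - (Gi 2 1 * G 1 1 * G 1 2) * h2
      have hX : ∀ i j, (G * soThreeNilpotent F 0 1 * Gi) i j = G i 0 * Gi 2 j := by
        intro i j
        simp [soThreeNilpotent, Matrix.mul_apply, Fin.sum_univ_three,
          Matrix.vecHead, Matrix.vecTail]
      refine ⟨G 2 1, G 1 1, ⟨G 0 1, by linear_combination e1 - (G 1 1 * G 2 1) * h2⟩, ?_⟩
      ext i j
      rw [hX]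
      fin_cases i <;> fin_cases j <;>
        simp [soThreeNilpotent, Matrix.vecHead, Matrix.vecTail, h00, h10, h20,
          hGi20, hGi21, hGi22]
  · rintro ⟨a, b, ⟨y, hy⟩, rfl⟩
    by_cases hb : b = 0
    · by_cases ha : a = 0
      · subst hb ha
        left
        ext i j
        fin_cases i <;> fin_cases j <;>
          simp [soThreeNilpotent, Matrix.vecHead, Matrix.vecTail]
      · subst hb
        right
        obtain ⟨c, hc⟩ : ∃ c, a * c = 1 := ⟨a⁻¹, mul_inv_cancel₀ ha⟩
        have hy0 : y = 0 := by
          have : y ^ 2 = 0 := by rw [hy, mul_zero]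
          exact pow_eq_zero_iff (n := 2) (by norm_num) |>.mp this
        set M : Matrix (Fin 3) (Fin 3) F := !![1, 0, 0; 0, 0, c; 0, a, 0] with hM
        have hMM : M * M = 1 := by
          ext i j
          fin_cases i <;> fin_cases j <;>
            simp [hM, Matrix.mul_apply, Fin.sum_univ_three, Matrix.vecHead, Matrix.vecTail,
              Matrix.one_apply] <;>
            first
              | linear_combination hc
              | linear_combination c * hc
        refine ⟨⟨M, M, hMM, hMM⟩, ?_, ?_⟩
        · intro v
          show (M.mulVec v 0) ^ 2 + (M.mulVec v 1) * (M.mulVec v 2) = _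
          simp only [hM, Matrix.mulVec, dotProduct, Fin.sum_univ_three]
          simp [Matrix.vecHead, Matrix.vecTail]
          linear_combination (v 1 * v 2) * hc
        · show soThreeNilpotent F a 0 = M * soThreeNilpotent F 0 1 * M
          ext i j
          fin_cases i <;> fin_cases j <;>
            simp [hM, soThreeNilpotent, Matrix.mul_apply, Fin.sum_univ_three,
              Matrix.vecHead, Matrix.vecTail]
    · right
      obtain ⟨c, hc⟩ : ∃ c, b * c = 1 := ⟨b⁻¹, mul_inv_cancel₀ hb⟩
      set M : Matrix (Fin 3) (Fin 3) F := !![1, y, 0; 0, b, 0; 0, a, c] with hM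
      set N : Matrix (Fin 3) (Fin 3) F := !![1, y*c, 0; 0, c, 0; 0, a, b] with hN
      have hMN : M * N = 1 := by
        ext i j
        fin_cases i <;> fin_cases j <;>
          simp [hM, hN, Matrix.mul_apply, Fin.sum_univ_three, Matrix.vecHead, Matrix.vecTail,
            Matrix.one_apply] <;>
          first
            | linear_combination hc
            | linear_combination (y*c) * h2
            | linear_combination (a*c) * h2
            | linear_combination y * h2 + y * hc
            | linear_combination (a*b) * h2
      have hNM : N * M = 1 := by
        ext i j
        fin_cases i <;> fin_cases j <;>
          simp [hM, hN, Matrix.mul_apply, Fin.sum_univ_three, Matrix.vecHead, Matrix.vecTail,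
            Matrix.one_apply] <;>
          first
            | linear_combination hc
            | linear_combination (y*c) * h2
            | linear_combination (a*c) * h2
            | linear_combination y * h2 + y * hc
            | linear_combination (a*b) * h2
      refine ⟨⟨M, N, hMN, hNM⟩, ?_, ?_⟩
      · intro v
        show (M.mulVec v 0) ^ 2 + (M.mulVec v 1) * (M.mulVec v 2) = _
        simp only [hM, Matrix.mulVec, dotProduct, Fin.sum_univ_three]
        simp [Matrix.vecHead, Matrix.vecTail]
        linear_combination (v 0 * v 1 * y) * h2 + (v 1 ^ 2 * a * b) * h2 + (v 1 ^ 2) * hy +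
          (v 1 * v 2) * hc
      · show soThreeNilpotent F a b = M * soThreeNilpotent F 0 1 * N
        ext i j
        fin_cases i <;> fin_cases j <;>
          simp [hM, hN, soThreeNilpotent, Matrix.mul_apply, Fin.sum_univ_three,
            Matrix.vecHead, Matrix.vecTail]
end

section
/- Let F be a field of characteristic 2, let a, a', e, e' ∈ F and let b, c, b', c' ∈ Fˣ. Then there exists g ∈ SO₅(F) with g · n(a,b,c,e) · g⁻¹ = n(a',b',c',e') if and only if e·c⁻¹·b⁻² − e'·(c')⁻¹·(b')⁻² ∈ F^{(2)}. -/
/-- The `5×5` matrix `n(a,b,c,e)` over `F` (rows and columns indexed `0,…,4`) with entries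
`n₀₃ = a`, `n₀₄ = b`, `n₁₂ = c`, `n₁₄ = e`, `n₂₃ = e`, `n₄₃ = c` and all other entries `0`. -/
def soFiveNilpotent (F : Type*) [Field F] (a b c e : F) : Matrix (Fin 5) (Fin 5) F :=
  !![0, 0, 0, a, b;
     0, 0, c, 0, e;
     0, 0, 0, e, 0;
     0, 0, 0, 0, 0;
     0, 0, 0, c, 0]

/-!
Write `n = n(a,b,c,e)` and `n' = n(a',b',c',e')`. If an isometry `P` of `Q` satisfies
`n P = P n'`, then `Q (nᵏ (P e₃)) = Q (n'ᵏ e₃)`. Now `Q (n v) = (a v₃ + b v₄)² + c e v₃²` and, in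
characteristic 2, `n² v = b c v₃ e₀`; so for `v = P e₃` the cases `k = 1, 2` give
`(a v₃ + b v₄ + a')² = c' e' + c e v₃²` and `(b c v₃)² = (b' c')²`, and dividing by `(b' c')²`
exhibits `e/(c b²) - e'/(c' b'²)` as a square.
Conversely, a unipotent isometry changes `e` into `e + c z²` (and `a` into `a + c z + b t`), and a
diagonal isometry rescales `(a, b, c, e)` by `(α, β, α/β, αβ)`; with `z = b y` and suitable
`t, α, β` their product conjugates `n` to `n'`.
-/

namespace SOFive

open Matrix

section CommRing

variable {R : Type*} [CommRing R]

def Q (v : Fin 5 → R) : R := v 0 ^ 2 + v 1 * v 3 + v 2 * v 4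

def IsIsometry (g : Matrix (Fin 5) (Fin 5) R) : Prop := ∀ v, Q (g *ᵥ v) = Q v

lemma IsIsometry.mul {g h : Matrix (Fin 5) (Fin 5) R} (hg : IsIsometry g) (hh : IsIsometry h) :
    IsIsometry (g * h) := fun v => by rw [← mulVec_mulVec, hg, hh]

lemma IsIsometry.inv {g : GL (Fin 5) R} (hg : IsIsometry (g : Matrix (Fin 5) (Fin 5) R)) :
    IsIsometry (↑g⁻¹ : Matrix (Fin 5) (Fin 5) R) := fun v => by
  rw [← hg, mulVec_mulVec, ← Units.val_mul, mul_inv_cancel, Units.val_one, one_mulVec]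

def unipotent (z t : R) : GL (Fin 5) R where
  val := !![1, 0, 0, 0, z; 0, 1, t, 0, t * z ^ 2; 0, 0, 1, 0, z ^ 2; 0, 0, 0, 1, 0; 0, 0, 0, t, 1]
  inv := !![1, 0, 0, z * t, -z; 0, 1, -t, 0, 0; 0, 0, 1, z ^ 2 * t, -z ^ 2; 0, 0, 0, 1, 0;
    0, 0, 0, -t, 1]
  val_inv := by
    ext i j; fin_cases i <;> fin_cases j <;> simp [mul_apply, Fin.sum_univ_five, mul_assoc]
  inv_val := by
    ext i j; fin_cases i <;> fin_cases j <;> simp [mul_apply, Fin.sum_univ_five]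

def torus (α β : Rˣ) : GL (Fin 5) R where
  val := diagonal ![1, α, β, ↑α⁻¹, ↑β⁻¹]
  inv := diagonal ![1, ↑α⁻¹, ↑β⁻¹, α, β]
  val_inv := by
    rw [diagonal_mul_diagonal, ← diagonal_one]; congr 1; ext i; fin_cases i <;> simp
  inv_val := by
    rw [diagonal_mul_diagonal, ← diagonal_one]; congr 1; ext i; fin_cases i <;> simp

lemma isIsometry_torus (α β : Rˣ) : IsIsometry (torus α β : Matrix (Fin 5) (Fin 5) R) := by
  intro v
  simp [torus, Q, mulVec_diagonal, mul_mul_mul_comm]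

lemma isIsometry_unipotent [CharP R 2] (z t : R) :
    IsIsometry (unipotent z t : Matrix (Fin 5) (Fin 5) R) := by
  intro v
  simp only [Q, mulVec, dotProduct, unipotent, Fin.isValue, of_apply, cons_val', cons_val_fin_one,
    cons_val_zero, Fin.sum_univ_five, one_mul, cons_val_one, zero_mul, add_zero, cons_val, zero_add]
  grind

end CommRing

section Field

variable {F : Type*} [Field F]

local notation "N" => soFiveNilpotent F

lemma soFiveNilpotent_mulVec (a b c e : F) (v : Fin 5 → F) :
    N a b c e *ᵥ v = ![a * v 3 + b * v 4, c * v 2 + e * v 4, e * v 3, 0, c * v 3] := by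
  ext i; fin_cases i <;> simp [soFiveNilpotent, mulVec, dotProduct, Fin.sum_univ_five]

lemma Q_soFiveNilpotent_mulVec (a b c e : F) (v : Fin 5 → F) :
    Q (N a b c e *ᵥ v) = (a * v 3 + b * v 4) ^ 2 + c * e * v 3 ^ 2 := by
  simp [soFiveNilpotent_mulVec, Q]; ring

lemma soFiveNilpotent_mulVec_mulVec [CharP F 2] (a b c e : F) (v : Fin 5 → F) :
    N a b c e *ᵥ (N a b c e *ᵥ v) = ![b * c * v 3, 0, 0, 0, 0] := by
  ext i; fin_cases i <;> simp [soFiveNilpotent_mulVec]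
  all_goals grind

lemma unipotent_mul_soFiveNilpotent [CharP F 2] (z t a b c e : F) :
    (unipotent z t : Matrix (Fin 5) (Fin 5) F) * N a b c e =
      N (a + c * z + b * t) b c (e + c * z ^ 2) * unipotent z t := by
  ext i j
  fin_cases i <;> fin_cases j <;> simp [unipotent, soFiveNilpotent, mul_apply, Fin.sum_univ_five]
  all_goals grind

lemma torus_mul_soFiveNilpotent (α β : Fˣ) (a b c e : F) :
    (torus α β : Matrix (Fin 5) (Fin 5) F) * N a b c e =
      N (α * a) (β * b) (α * β⁻¹ * c) (α * β * e) * torus α β := by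
  ext i j
  fin_cases i <;> fin_cases j <;> simp [torus, soFiveNilpotent, mul_apply, Fin.sum_univ_five]
  all_goals field_simp

lemma exists_sq_eq_sub_of_isIsometry_of_mul_eq_mul [CharP F 2] {P : Matrix (Fin 5) (Fin 5) F}
    (hP : IsIsometry P) {a a' e e' : F} {b c b' c' : Fˣ}
    (h : N a b c e * P = P * N a' b' c' e') :
    ∃ y : F,
      y ^ 2 = e * (c : F)⁻¹ * (b : F)⁻¹ ^ 2 - e' * (c' : F)⁻¹ * (b' : F)⁻¹ ^ 2 := by
  have hN : ∀ w, N a b c e *ᵥ (P *ᵥ w) = P *ᵥ (N a' b' c' e' *ᵥ w) := fun w => by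
    rw [mulVec_mulVec, h, ← mulVec_mulVec]
  set v := P *ᵥ ![0, 0, 0, 1, 0]
  have h1 : Q (N a b c e *ᵥ v) = Q (N a' b' c' e' *ᵥ ![0, 0, 0, 1, 0]) := by rw [hN, hP]
  have h2 : Q (N a b c e *ᵥ (N a b c e *ᵥ v)) =
      Q (N a' b' c' e' *ᵥ (N a' b' c' e' *ᵥ ![0, 0, 0, 1, 0])) := by rw [hN, hN, hP]
  simp only [Q_soFiveNilpotent_mulVec, soFiveNilpotent_mulVec_mulVec] at h1 h2
  simp only [Q, cons_val, cons_val_zero, cons_val_one, mul_zero, mul_one, add_zero, one_pow]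
    at h1 h2
  refine ⟨(a * v 3 + b * v 4 + a') / (b' * c'), ?_⟩
  field_simp
  rw [CharTwo.add_sq]
  linear_combination (b ^ 2 * c : F) * h1 - e * h2 +
    (b ^ 2 * c * (a' ^ 2 + c' * e') - c' ^ 2 * b' ^ 2 * e : F) * CharTwo.two_eq_zero (R := F)

lemma exists_isIsometry_mul_eq_mul_of_sq_eq_sub [CharP F 2] {a a' e e' y : F} {b c b' c' : Fˣ}
    (hy : y ^ 2 = e * (c : F)⁻¹ * (b : F)⁻¹ ^ 2 - e' * (c' : F)⁻¹ * (b' : F)⁻¹ ^ 2) :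
    ∃ g : GL (Fin 5) F, IsIsometry (g : Matrix (Fin 5) (Fin 5) F) ∧
      g * N a b c e = N a' b' c' e' * g := by
  refine ⟨torus (c' * b' * (c * b)⁻¹) (b' * b⁻¹) *
      unipotent (b * y) (a' * c / (c' * b') + a / b + c * y),
    (isIsometry_torus _ _).mul (isIsometry_unipotent _ _), ?_⟩
  rw [Units.val_mul, mul_assoc, unipotent_mul_soFiveNilpotent, ← mul_assoc,
    torus_mul_soFiveNilpotent, mul_assoc]
  congr 3
  · push_cast
    field_simp
    linear_combination (c' * b' * a + c' * b' * c * b * y : F) * CharTwo.two_eq_zero (R := F)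
  · push_cast
    field_simp
  · push_cast
    field_simp
  · push_cast
    field_simp at hy ⊢
    linear_combination hy + (e * c' * b' ^ 2 - c * b ^ 2 * e' : F) * CharTwo.two_eq_zero (R := F)

end Field

end SOFive

/-- Let `F` be a field of characteristic 2, `Q(v) = v₀² + v₁v₃ + v₂v₄` and
`SO₅(F) = {g ∈ GL₅(F) : Q(gv) = Q(v) for all v}`.  For `a, a', e, e' ∈ F` and
`b, c, b', c' ∈ Fˣ`, there exists `g ∈ SO₅(F)` with `g n(a,b,c,e) g⁻¹ = n(a',b',c',e')` if
and only if `e·c⁻¹·b⁻² − e'·c'⁻¹·b'⁻² ∈ F^{(2)}`. -/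
theorem so5_nilpotent_conjugacy_iff
    {F : Type*} [Field F] [CharP F 2]
    (a a' e e' : F) (b c b' c' : Fˣ) :
    (∃ g : GL (Fin 5) F,
      (∀ v : Fin 5 → F,
        ((g : Matrix (Fin 5) (Fin 5) F).mulVec v 0) ^ 2 +
          ((g : Matrix (Fin 5) (Fin 5) F).mulVec v 1) *
            ((g : Matrix (Fin 5) (Fin 5) F).mulVec v 3) +
          ((g : Matrix (Fin 5) (Fin 5) F).mulVec v 2) *
            ((g : Matrix (Fin 5) (Fin 5) F).mulVec v 4)
        = (v 0) ^ 2 + (v 1) * (v 3) + (v 2) * (v 4)) ∧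
      (g : Matrix (Fin 5) (Fin 5) F) * soFiveNilpotent F a (b : F) (c : F) e *
          ((g⁻¹ : GL (Fin 5) F) : Matrix (Fin 5) (Fin 5) F)
        = soFiveNilpotent F a' (b' : F) (c' : F) e') ↔
    ∃ y : F, y ^ 2 =
      e * ((c : F))⁻¹ * (((b : F))⁻¹) ^ 2 - e' * ((c' : F))⁻¹ * (((b' : F))⁻¹) ^ 2 := by
  change (∃ g : GL (Fin 5) F, SOFive.IsIsometry (g : Matrix (Fin 5) (Fin 5) F) ∧ _) ↔ _
  constructor
  · rintro ⟨g, hg, hconj⟩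
    refine SOFive.exists_sq_eq_sub_of_isIsometry_of_mul_eq_mul (a := a) (a' := a') hg.inv ?_
    rw [← hconj, ← mul_assoc, ← mul_assoc, Units.inv_mul, one_mul]
  · rintro ⟨y, hy⟩
    obtain ⟨g, hg, hgN⟩ :=
      SOFive.exists_isIsometry_mul_eq_mul_of_sq_eq_sub (a := a) (a' := a') hy
    exact ⟨g, hg, (Units.mul_inv_eq_iff_eq_mul g).2 hgN⟩
end

section
/- Let F be a field of characteristic p > 0 and let X be an n×n matrix over F. Since ad X := (Y ↦ XY − YX) maps scalar matrices to 0, it induces a linear endomorphism of the quotient space M_n(F)/F·1. This induced endomorphism is nilpotent if and only if there exist an integer k ≥ 0 and a ∈ F such that X^{pᵏ} = a·1. -/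
/-!
In characteristic `p`, `ad X` is the difference of the commuting operators of left and right
multiplication by `X`, so `(ad X) ^ p ^ k = ad (X ^ p ^ k)`. As `ad X` kills the scalars, the
induced map is nilpotent exactly when `ad X` is, i.e. when some `X ^ p ^ k` is central, and the
centre of `M_n(F)` is `F·1`.
-/

namespace Module.End

variable {R M : Type*} [Ring R] [AddCommGroup M] [Module R M]

theorem isNilpotent_mapQ_iff_of_le_ker {f : Module.End R M} {p : Submodule R M}
    (hker : p ≤ LinearMap.ker f) :
    IsNilpotent (p.mapQ p f (hker.trans (LinearMap.ker_le_comap f))) ↔ IsNilpotent f := by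
  refine ⟨fun ⟨m, hm⟩ => ⟨m + 1, LinearMap.ext fun x => ?_⟩, IsNilpotent.mapQ _⟩
  have hx : (f ^ m) x ∈ p := by
    rw [← Submodule.Quotient.mk_eq_zero]
    simpa using LinearMap.congr_fun ((p.mapQ_pow _ m).trans hm) (Submodule.Quotient.mk x)
  rw [pow_succ', Module.End.mul_apply]
  exact hker hx

end Module.End

namespace LieAlgebra

attribute [local instance] LieRing.ofAssociativeRing

variable {F A : Type*} [Field F] [Ring A] [Algebra F A]

theorem ad_pow_expChar_pow [Nontrivial A] (p : ℕ) [ExpChar F p] (a : A) (k : ℕ) :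
    ad F A a ^ p ^ k = ad F A (a ^ p ^ k) := by
  have : ExpChar (Module.End F A) p := expChar_of_injective_algebraMap (algebraMap F _).injective p
  simp only [ad_eq_lmul_left_sub_lmul_right, Pi.sub_apply,
    sub_pow_expChar_pow_of_commute p k (LinearMap.commute_mulLeft_right a a),
    LinearMap.pow_mulLeft, LinearMap.pow_mulRight]

theorem ad_eq_zero_iff_mem_center {a : A} : ad F A a = 0 ↔ a ∈ Subalgebra.center F A := by
  simp only [LinearMap.ext_iff, ad_apply, LieRing.of_associative_ring_bracket,
    LinearMap.zero_apply, sub_eq_zero, Subalgebra.mem_center_iff, eq_comm]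

theorem span_one_le_ker_ad (a : A) : Submodule.span F {1} ≤ LinearMap.ker (ad F A a) := by
  simp [Submodule.span_le, ad_apply, LieRing.of_associative_ring_bracket]

theorem isNilpotent_ad_iff_exists_pow_mem_center (p : ℕ) [Fact p.Prime] [CharP F p] (a : A) :
    IsNilpotent (ad F A a) ↔ ∃ k : ℕ, a ^ p ^ k ∈ Subalgebra.center F A := by
  nontriviality A
  simp_rw [← ad_eq_zero_iff_mem_center, ← ad_pow_expChar_pow]
  constructor
  · rintro ⟨m, hm⟩
    exact ⟨m, pow_eq_zero_of_le (Nat.lt_pow_self (Fact.out : p.Prime).one_lt).le hm⟩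
  · rintro ⟨k, hk⟩
    exact ⟨p ^ k, hk⟩

end LieAlgebra

/-- Let `F` be a field of characteristic `p > 0` and `X` an `n×n` matrix over `F`.  Since
`ad X : Y ↦ X*Y − Y*X` kills scalar matrices, it induces a linear endomorphism `g` of the
quotient space `M_n(F)/F·1`.  This induced endomorphism is nilpotent if and only if there
exist `k ≥ 0` and `a ∈ F` such that `X^{pᵏ} = a • 1`. -/
theorem induced_ad_nilpotent_iff_pow_scalar
    {F : Type*} [Field F] (p : ℕ) (hp : 0 < p) [CharP F p]
    (n : ℕ) (X : Matrix (Fin n) (Fin n) F)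
    (g : (Matrix (Fin n) (Fin n) F ⧸ Submodule.span F {(1 : Matrix (Fin n) (Fin n) F)}) →ₗ[F]
         (Matrix (Fin n) (Fin n) F ⧸ Submodule.span F {(1 : Matrix (Fin n) (Fin n) F)}))
    (hg : ∀ Y : Matrix (Fin n) (Fin n) F,
      g (Submodule.Quotient.mk Y) = Submodule.Quotient.mk (X * Y - Y * X)) :
    IsNilpotent g ↔
      ∃ (k : ℕ) (a : F), X ^ p ^ k = a • (1 : Matrix (Fin n) (Fin n) F) := by
  have : NeZero p := ⟨hp.ne'⟩
  have := CharP.char_is_prime_of_pos F p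
  -- introduced only here: as an instance it would also supply the `AddCommGroup` of the statement
  let _ : LieRing (Matrix (Fin n) (Fin n) F) := LieRing.ofAssociativeRing
  have hker := LieAlgebra.span_one_le_ker_ad (F := F) X
  have hg_eq : g = (Submodule.span F {1}).mapQ _ (LieAlgebra.ad F _ X)
      (hker.trans (LinearMap.ker_le_comap _)) :=
    Submodule.linearMap_qext _ (LinearMap.ext hg)
  rw [hg_eq, Module.End.isNilpotent_mapQ_iff_of_le_ker hker,
    LieAlgebra.isNilpotent_ad_iff_exists_pow_mem_center p]
  simp_rw [Algebra.IsCentral.mem_center_iff, Algebra.algebraMap_eq_smul_one]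
end
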